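/- Let M ∈ ℝ^{p×m(n+1)} have full row rank p and let d = (d_n, …, d_1, d_0) ∈ ℝ^{n+1} with d_0 ≠ 0. Then the block matrix Z = [[M, 0_{p×m(L−1)}], [0_{m(L−1)×m}, T ⊗ I_m]] ∈ ℝ^{(p+m(L−1))×m(L+n)} has full row rank p + m(L−1). -/

import Mathlib

/-!
The rows of `M` vanish on the block columns `n + 1, …, L + n - 1`, and on those columns the
Toeplitz rows form `T' ⊗ I_m`, where `T'` (the last `L - 1` columns of `T`) is lower triangular
with diagonal `d₀`. Hence in a vanishing combination of the rows of `Z` the Toeplitz coefficients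
vanish first, and then the coefficients of `M` because `M` has independent rows.
-/

open Matrix Finset

/-- The Toeplitz matrix `T ∈ ℝ^{(L-1)×(L+n-1)}` with `T_{i,j} = d_{n-(j-i)}` for
`0 ≤ j - i ≤ n` and zero otherwise. -/
noncomputable def Tmat (d : ℕ → ℝ) (n L : ℕ) : Matrix (Fin (L - 1)) (Fin (L + n - 1)) ℝ :=
  Matrix.of fun i j =>
    if (i : ℕ) ≤ (j : ℕ) ∧ (j : ℕ) ≤ (i : ℕ) + n then d (n - ((j : ℕ) - (i : ℕ))) else 0

/-- The block matrix `Z = [[M, 0], [0, T ⊗ I_m]]`, with `M` occupying the first `m(n+1)`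
columns and `T ⊗ I_m` occupying the last `m(L+n-1)` columns. -/
noncomputable def Zgen {n m p : ℕ} (M : Matrix (Fin p) (Fin (n + 1) × Fin m) ℝ)
    (d : ℕ → ℝ) (L : ℕ) :
    Matrix (Fin p ⊕ (Fin (L - 1) × Fin m)) (Fin (L + n) × Fin m) ℝ :=
  Matrix.of fun i jl =>
    match i with
    | Sum.inl i' =>
        if h : (jl.1 : ℕ) ≤ n then M i' (⟨(jl.1 : ℕ), by omega⟩, jl.2) else 0
    | Sum.inr il' =>
        if h : 1 ≤ (jl.1 : ℕ) then
          Tmat d n L il'.1 ⟨(jl.1 : ℕ) - 1, by have := jl.1.isLt; omega⟩ *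
            (if il'.2 = jl.2 then 1 else 0)
        else 0

namespace Matrix

variable {ι κ σ τ R : Type*}

theorem linearIndependent_row_of_rank_eq_card [Field R] [Fintype ι] [Fintype σ]
    {A : Matrix ι σ R} (h : A.rank = Fintype.card ι) : LinearIndependent R A.row := by
  rw [linearIndependent_iff_card_eq_finrank_span, Set.finrank, ← rank_eq_finrank_span_row, h]

theorem linearIndependent_row_of_isUnit_det_submatrix [CommRing R] [Fintype ι] [Fintype κ]
    [DecidableEq κ] {Z : Matrix (ι ⊕ κ) σ R} (colsA : τ → σ) (colsC : κ → σ)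
    (hzero : ∀ i k, Z (Sum.inl i) (colsC k) = 0)
    (hA : LinearIndependent R (Z.submatrix Sum.inl colsA).row)
    (hC : IsUnit (Z.submatrix Sum.inr colsC).det) :
    LinearIndependent R Z.row := by
  rw [Fintype.linearIndependent_iff]
  intro g hg
  have hvec : g ᵥ* Z = 0 := by rwa [vecMul_eq_sum]
  have hg_inr : ∀ k, g (Sum.inr k) = 0 := by
    refine congrFun (vecMul_injective_of_isUnit ((isUnit_iff_isUnit_det _).2 hC) ?_)
    ext k
    simpa [vecMul, dotProduct, Fintype.sum_sum_type, hzero] using congrFun hvec (colsC k)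
  have hg_inl : ∀ i, g (Sum.inl i) = 0 := by
    refine congrFun (vecMul_injective_iff.2 hA ?_)
    ext j
    simpa [vecMul, dotProduct, Fintype.sum_sum_type, hg_inr] using congrFun hvec (colsA j)
  rintro (i | k)
  exacts [hg_inl i, hg_inr k]

end Matrix

namespace Tmat

variable (d : ℕ → ℝ) (n L : ℕ)

def trailingCol (i : Fin (L - 1)) : Fin (L + n - 1) := ⟨i + n, by omega⟩

theorem isLowerTriangular_submatrix_trailingCol :
    ((Tmat d n L).submatrix id (trailingCol n L)).IsLowerTriangular := by
  intro i j hij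
  have : (i : ℕ) < j := hij
  simp only [Tmat, trailingCol, submatrix_apply, id_eq, of_apply]
  exact if_neg (by omega)

theorem det_submatrix_trailingCol :
    ((Tmat d n L).submatrix id (trailingCol n L)).det = d 0 ^ (L - 1) := by
  rw [det_of_isLowerTriangular _ (isLowerTriangular_submatrix_trailingCol d n L)]
  simp [Tmat, trailingCol]

end Tmat

namespace Zgen

open Kronecker

def leadingCol {n m L : ℕ} (hL : 0 < L) : Fin (n + 1) × Fin m → Fin (L + n) × Fin m :=
  Prod.map (Fin.castLE (by omega)) id

variable {n m p : ℕ} (M : Matrix (Fin p) (Fin (n + 1) × Fin m) ℝ) (d : ℕ → ℝ) (L : ℕ)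

def trailingCol : Fin (L - 1) × Fin m → Fin (L + n) × Fin m :=
  Prod.map (fun i => ⟨i + n + 1, by omega⟩) id

theorem submatrix_inl_leadingCol (hL : 0 < L) :
    (Zgen M d L).submatrix Sum.inl (leadingCol hL) = M := by
  ext a ⟨j, l⟩
  simp [Zgen, leadingCol, Nat.le_of_lt_succ j.isLt]

theorem inl_trailingCol (a : Fin p) (k : Fin (L - 1) × Fin m) :
    Zgen M d L (Sum.inl a) (trailingCol L k) = 0 := by
  simp [Zgen, trailingCol]

theorem submatrix_inr_trailingCol :
    (Zgen M d L).submatrix Sum.inr (trailingCol L) =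
      (Tmat d n L).submatrix id (Tmat.trailingCol n L) ⊗ₖ (1 : Matrix (Fin m) (Fin m) ℝ) := by
  ext ⟨i, l⟩ ⟨j, l'⟩
  simp [Zgen, trailingCol, Tmat.trailingCol, one_apply]

end Zgen

theorem stmt_17_general {n m p L : ℕ} (hL : 0 < L)
    (M : Matrix (Fin p) (Fin (n + 1) × Fin m) ℝ) (hM : M.rank = p)
    (d : ℕ → ℝ) (hd0 : d 0 ≠ 0) :
    (Zgen M d L).rank = p + m * (L - 1) := by
  have hMrows :
      LinearIndependent ℝ ((Zgen M d L).submatrix Sum.inl (Zgen.leadingCol hL)).row := by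
    rw [Zgen.submatrix_inl_leadingCol M d L hL]
    exact linearIndependent_row_of_rank_eq_card (by simpa using hM)
  have hTdet : IsUnit ((Zgen M d L).submatrix Sum.inr (Zgen.trailingCol L)).det := by
    rw [Zgen.submatrix_inr_trailingCol, det_kronecker, Tmat.det_submatrix_trailingCol, det_one]
    simp [hd0]
  have hZrows := linearIndependent_row_of_isUnit_det_submatrix _ _ (Zgen.inl_trailingCol M d L)
    hMrows hTdet
  rw [hZrows.rank_matrix]
  simp [mul_comm]

/-- if `M` has full row rank `p` and `d_0 ≠ 0`, then
`Z = [[M, 0], [0, T ⊗ I_m]]` has full row rank `p + m(L-1)`. -/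
theorem stmt_17 {n m p L : ℕ} (hn : 0 < n) (hm : 0 < m) (hp : 0 < p) (hL : 0 < L)
    (M : Matrix (Fin p) (Fin (n + 1) × Fin m) ℝ) (hM : M.rank = p)
    (d : ℕ → ℝ) (hd0 : d 0 ≠ 0) :
    (Zgen M d L).rank = p + m * (L - 1) :=
  stmt_17_general hL M hM d hd0
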